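/- Let E be an odd exact Courant algebroid over an n-dimensional manifold M, let 𝓕 be a B_n-generalized almost complex structure on E and U := Ker 𝓕. Then 𝓕 is integrable if and only if its Nijenhuis tensor N_𝓕, defined on sections of U^⊥ by N_𝓕(u,v) := [𝓕u,𝓕v] − [u,v] − 𝓕([𝓕u,v] + [u,𝓕v]), vanishes identically on U^⊥ × U^⊥. -/

import Mathlib

/-! Common framework: Courant algebroids over a smooth manifold, described through
their fibers, their (smooth) sections, scalar product, anchor and Dorfman bracket;
generalized connections, torsion, generalized metrics, `Bₙ`-generalized almost
complex structures on odd exact Courant algebroids, and generalized complex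
structures on Courant algebroids of even rank. -/

open Manifold

noncomputable section

/-- A bilinear symmetric form on a real vector space has signature `(p, q)`. -/
def BilinSignature {V : Type*} [AddCommGroup V] [Module ℝ V]
    (g : V →ₗ[ℝ] V →ₗ[ℝ] ℝ) (p q : ℕ) : Prop :=
  ∃ P N : Submodule ℝ V, IsCompl P N ∧
    (∀ v ∈ P, ∀ w ∈ N, g v w = 0) ∧
    Module.finrank ℝ P = p ∧ Module.finrank ℝ N = q ∧
    (∀ v ∈ P, v ≠ 0 → 0 < g v v) ∧ (∀ v ∈ N, v ≠ 0 → g v v < 0)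

/-- The derivative `(π(u)f)(x)` of a function `f` in the direction of a tangent vector. -/
def mdirDeriv {m : ℕ} {M : Type*} [TopologicalSpace M]
    [ChartedSpace (EuclideanSpace ℝ (Fin m)) M]
    [IsManifold (𝓡 m) (⊤ : ℕ∞) M]
    (f : M → ℝ) (x : M) (v : TangentSpace (𝓡 m) x) : ℝ :=
  mfderiv (𝓡 m) 𝓘(ℝ, ℝ) f x v

/-- A Courant algebroid over an `m`-dimensional manifold `M`, presented by the data of
its fibers, its smooth sections, its fiberwise scalar product `⟨·,·⟩`, its anchor
`π : E → TM` and its (Dorfman) bracket `[·,·]` on sections, subject to the axioms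
`[u,[v,w]] = [[u,v],w] + [v,[u,w]]`, `[u,fv] = f[u,v] + (π(u)f)v`,
`π(u)⟨v,w⟩ = ⟨[u,v],w⟩ + ⟨v,[u,w]⟩` and `⟨[u,v]+[v,u],w⟩ = π(w)⟨u,v⟩`. -/
structure CourantAlgebroid (m : ℕ) (M : Type*) [TopologicalSpace M]
    [ChartedSpace (EuclideanSpace ℝ (Fin m)) M]
    [IsManifold (𝓡 m) (⊤ : ℕ∞) M] where
  /-- the fiber of the vector bundle `E` at `x ∈ M` -/
  Fib : M → Type
  [fibAdd : ∀ x, AddCommGroup (Fib x)]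
  [fibMod : ∀ x, Module ℝ (Fib x)]
  [fibFin : ∀ x, FiniteDimensional ℝ (Fib x)]
  /-- the set `Γ(E)` of smooth sections of `E` -/
  secs : Set (∀ x, Fib x)
  secs_zero : (fun x => (0 : Fib x)) ∈ secs
  secs_add : ∀ {u v}, u ∈ secs → v ∈ secs → (fun x => u x + v x) ∈ secs
  secs_neg : ∀ {u}, u ∈ secs → (fun x => -(u x)) ∈ secs
  secs_smul : ∀ {f : M → ℝ}, ContMDiff (𝓡 m) 𝓘(ℝ, ℝ) (⊤ : ℕ∞) f →
    ∀ {u}, u ∈ secs → (fun x => f x • u x) ∈ secs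
  /-- the scalar product `⟨·,·⟩` -/
  g : ∀ x, Fib x →ₗ[ℝ] Fib x →ₗ[ℝ] ℝ
  g_symm : ∀ x u v, g x u v = g x v u
  g_nondeg : ∀ x (v : Fib x), (∀ w, g x v w = 0) → v = 0
  g_smooth : ∀ {u v}, u ∈ secs → v ∈ secs →
    ContMDiff (𝓡 m) 𝓘(ℝ, ℝ) (⊤ : ℕ∞) (fun x => g x (u x) (v x))
  /-- the anchor `π : E → TM` -/
  anchor : ∀ x, Fib x →ₗ[ℝ] TangentSpace (𝓡 m) x
  anchor_smooth : ∀ {u}, u ∈ secs →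
    ContMDiff (𝓡 m) (𝓡 m).tangent (⊤ : ℕ∞)
      (fun x => (⟨x, anchor x (u x)⟩ : TangentBundle (𝓡 m) M))
  /-- the Dorfman bracket `[·,·]` -/
  bracket : (∀ x, Fib x) → (∀ x, Fib x) → (∀ x, Fib x)
  bracket_secs : ∀ {u v}, u ∈ secs → v ∈ secs → bracket u v ∈ secs
  bracket_add_left : ∀ {u v w}, u ∈ secs → v ∈ secs → w ∈ secs →
    bracket (fun x => u x + v x) w = fun x => bracket u w x + bracket v w x
  bracket_add_right : ∀ {u v w}, u ∈ secs → v ∈ secs → w ∈ secs →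
    bracket u (fun x => v x + w x) = fun x => bracket u v x + bracket u w x
  bracket_smul_left : ∀ (c : ℝ) {u v}, u ∈ secs → v ∈ secs →
    bracket (fun x => c • u x) v = fun x => c • bracket u v x
  bracket_smul_right : ∀ (c : ℝ) {u v}, u ∈ secs → v ∈ secs →
    bracket u (fun x => c • v x) = fun x => c • bracket u v x
  /-- `[u,[v,w]] = [[u,v],w] + [v,[u,w]]` -/
  jacobi : ∀ {u v w}, u ∈ secs → v ∈ secs → w ∈ secs →
    bracket u (bracket v w)
      = fun x => bracket (bracket u v) w x + bracket v (bracket u w) x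
  /-- `[u,fv] = f[u,v] + (π(u)f) v` -/
  leibniz : ∀ {f : M → ℝ}, ContMDiff (𝓡 m) 𝓘(ℝ, ℝ) (⊤ : ℕ∞) f → ∀ {u v},
    u ∈ secs → v ∈ secs →
    bracket u (fun x => f x • v x)
      = fun x => f x • bracket u v x
          + mdirDeriv f x (anchor x (u x)) • v x
  /-- `π(u)⟨v,w⟩ = ⟨[u,v],w⟩ + ⟨v,[u,w]⟩` -/
  compat : ∀ {u v w}, u ∈ secs → v ∈ secs → w ∈ secs → ∀ x,
    mdirDeriv (fun y => g y (v y) (w y)) x (anchor x (u x))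
      = g x (bracket u v x) (w x) + g x (v x) (bracket u w x)
  /-- `⟨[u,v]+[v,u],w⟩ = π(w)⟨u,v⟩` -/
  symBracket : ∀ {u v w}, u ∈ secs → v ∈ secs → w ∈ secs → ∀ x,
    g x (bracket u v x + bracket v u x) (w x)
      = mdirDeriv (fun y => g y (u y) (v y)) x (anchor x (w x))

attribute [instance] CourantAlgebroid.fibAdd CourantAlgebroid.fibMod CourantAlgebroid.fibFin

/-- An odd exact Courant algebroid over an `n`-dimensional manifold: a Courant algebroid
of rank `2n+1` whose scalar product has signature `(n+1, n)`. -/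
structure OddExactCourantAlgebroid (n : ℕ) (M : Type*) [TopologicalSpace M]
    [ChartedSpace (EuclideanSpace ℝ (Fin n)) M]
    [IsManifold (𝓡 n) (⊤ : ℕ∞) M]
    extends CourantAlgebroid n M where
  rank_eq : ∀ x, Module.finrank ℝ (Fib x) = 2 * n + 1
  g_sig : ∀ x, BilinSignature (g x) (n + 1) n

variable {m : ℕ} {M : Type*} [TopologicalSpace M]
  [ChartedSpace (EuclideanSpace ℝ (Fin m)) M]
  [IsManifold (𝓡 m) (⊤ : ℕ∞) M]

/-- A generalized connection `D` on a Courant algebroid: `D_v (f u) = (π(v)f) u + f D_v u`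
and `π(w)⟨u,v⟩ = ⟨D_w u, v⟩ + ⟨u, D_w v⟩`; moreover `D_v u` is tensorial
(`C^∞(M)`-linear) in the direction `v`. `D.D v u` denotes `D_v u`. -/
structure GenConnection (E : CourantAlgebroid m M) where
  D : (∀ x, E.Fib x) → (∀ x, E.Fib x) → (∀ x, E.Fib x)
  d_secs : ∀ {v u}, v ∈ E.secs → u ∈ E.secs → D v u ∈ E.secs
  add_dir : ∀ {v w u}, v ∈ E.secs → w ∈ E.secs → u ∈ E.secs →
    D (fun x => v x + w x) u = fun x => D v u x + D w u x
  smul_dir : ∀ {f : M → ℝ}, ContMDiff (𝓡 m) 𝓘(ℝ, ℝ) (⊤ : ℕ∞) f → ∀ {v u},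
    v ∈ E.secs → u ∈ E.secs →
    D (fun x => f x • v x) u = fun x => f x • D v u x
  add_sec : ∀ {v u w}, v ∈ E.secs → u ∈ E.secs → w ∈ E.secs →
    D v (fun x => u x + w x) = fun x => D v u x + D v w x
  smul_sec : ∀ (c : ℝ) {v u}, v ∈ E.secs → u ∈ E.secs →
    D v (fun x => c • u x) = fun x => c • D v u x
  leibniz : ∀ {f : M → ℝ}, ContMDiff (𝓡 m) 𝓘(ℝ, ℝ) (⊤ : ℕ∞) f → ∀ {v u},
    v ∈ E.secs → u ∈ E.secs →
    D v (fun x => f x • u x)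
      = fun x => mdirDeriv f x (E.anchor x (v x)) • u x + f x • D v u x
  metric : ∀ {u v w}, u ∈ E.secs → v ∈ E.secs → w ∈ E.secs → ∀ x,
    mdirDeriv (fun y => E.g y (u y) (v y)) x (E.anchor x (w x))
      = E.g x (D w u x) (v x) + E.g x (u x) (D w v x)

namespace GenConnection

variable {E : CourantAlgebroid m M}

/-- The torsion `T^D(u,v,w) = ⟨D_u v − D_v u − [u,v], w⟩ + ⟨D_w u, v⟩` of a generalized
connection. -/
def torsion (D : GenConnection E) (u v w : ∀ x, E.Fib x) : M → ℝ :=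
  fun x => E.g x (D.D u v x - D.D v u x - E.bracket u v x) (w x) + E.g x (D.D w u x) (v x)

/-- A generalized connection is torsion-free if its torsion vanishes. -/
def TorsionFree (D : GenConnection E) : Prop :=
  ∀ {u v w}, u ∈ E.secs → v ∈ E.secs → w ∈ E.secs → ∀ x, D.torsion u v w x = 0

/-- `D` preserves the endomorphism (field) `F`, i.e. `DF = 0`:
`(D_u F) v = D_u (F v) − F (D_u v) = 0` for all sections `u`, `v`. -/
def PreservesEnd (D : GenConnection E) (F : ∀ x, E.Fib x →ₗ[ℝ] E.Fib x) : Prop :=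
  ∀ {u v}, u ∈ E.secs → v ∈ E.secs → ∀ x, D.D u (fun y => F y (v y)) x = F x (D.D u v x)

/-- `D` preserves the section `s`, i.e. `Ds = 0`. -/
def PreservesSec (D : GenConnection E) (s : ∀ x, E.Fib x) : Prop :=
  ∀ {v}, v ∈ E.secs → ∀ x, D.D v s x = 0

end GenConnection

/-- The i-eigenbundle `L ⊂ E^ℂ` of a family `F` of endomorphisms has its space of
sections closed under the (complexified) Dorfman bracket.  A complex section
`s = u + iv` of `E^ℂ` lies in `Γ(L)` iff `F u = -v` and `F v = u`; the bracket of
`u + iv` and `u' + iv'` is `([u,u'] - [v,v']) + i([u,v'] + [v,u'])`. -/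
def CourantAlgebroid.IntegrableF (E : CourantAlgebroid m M)
    (F : ∀ x, E.Fib x →ₗ[ℝ] E.Fib x) : Prop :=
  ∀ {u v u' v'}, u ∈ E.secs → v ∈ E.secs → u' ∈ E.secs → v' ∈ E.secs →
    (∀ x, F x (u x) = -(v x)) → (∀ x, F x (v x) = u x) →
    (∀ x, F x (u' x) = -(v' x)) → (∀ x, F x (v' x) = u' x) →
    (∀ x, F x (E.bracket u u' x - E.bracket v v' x)
        = -(E.bracket u v' x + E.bracket v u' x)) ∧
    (∀ x, F x (E.bracket u v' x + E.bracket v u' x)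
        = E.bracket u u' x - E.bracket v v' x)

/-- A generalized (admissible) metric on a Courant algebroid, described by the associated
orthogonal, `⟨·,·⟩`-symmetric involution `G^end` of `E`; its `−1`-eigenbundle `E₋`
(the subbundle defining the generalized metric) is required to have nondegenerate
scalar product and anchor restricting to an isomorphism `E₋ → TM`. -/
structure GenMetric (E : CourantAlgebroid m M) where
  Gend : ∀ x, E.Fib x →ₗ[ℝ] E.Fib x
  smooth : ∀ {u}, u ∈ E.secs → (fun x => Gend x (u x)) ∈ E.secs
  symm : ∀ x u v, E.g x (Gend x u) v = E.g x u (Gend x v)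
  invol : ∀ x v, Gend x (Gend x v) = v
  nondeg_minus : ∀ x (v : E.Fib x), Gend x v = -v →
    (∀ w, Gend x w = -w → E.g x v w = 0) → v = 0
  anchor_bij : ∀ x, Function.Bijective
    (fun v : {w : E.Fib x // Gend x w = -w} => E.anchor x v.1)

/-- `DG = 0`, i.e. `π(w) G(u,v) = G(D_w u, v) + G(u, D_w v)` where
`G(u,v) = ⟨G^end u, v⟩`. -/
def GenConnection.PreservesMetric {E : CourantAlgebroid m M}
    (D : GenConnection E) (G : GenMetric E) : Prop :=
  ∀ {u v w}, u ∈ E.secs → v ∈ E.secs → w ∈ E.secs → ∀ x,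
    mdirDeriv (fun y => E.g y (G.Gend y (u y)) (v y)) x (E.anchor x (w x))
      = E.g x (G.Gend x (D.D w u x)) (v x) + E.g x (G.Gend x (u x)) (D.D w v x)

/-- A `Bₙ`-generalized almost complex structure on an odd exact Courant algebroid `E`
over an `n`-dimensional manifold: a `⟨·,·⟩`-skew-symmetric endomorphism `𝓕` of rank `2n`
satisfying `𝓕² = −Id + (−1)ⁿ ⟨·,u₀⟩ u₀` for a section `u₀` with `⟨u₀,u₀⟩ = (−1)ⁿ`. -/
structure BnGACS {n : ℕ} {M' : Type*} [TopologicalSpace M']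
    [ChartedSpace (EuclideanSpace ℝ (Fin n)) M']
    [IsManifold (𝓡 n) (⊤ : ℕ∞) M']
    (E : OddExactCourantAlgebroid n M') where
  F : ∀ x, E.Fib x →ₗ[ℝ] E.Fib x
  smooth : ∀ {u}, u ∈ E.secs → (fun x => F x (u x)) ∈ E.secs
  skew : ∀ x u v, E.g x (F x u) v = - E.g x u (F x v)
  u₀ : ∀ x, E.Fib x
  u₀_mem : u₀ ∈ E.secs
  u₀_norm : ∀ x, E.g x (u₀ x) (u₀ x) = (-1 : ℝ) ^ n
  F_sq : ∀ x v, F x (F x v) = -v + ((-1 : ℝ) ^ n * E.g x v (u₀ x)) • u₀ x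
  rank_F : ∀ x, Module.finrank ℝ (LinearMap.range (F x)) = 2 * n

namespace BnGACS

variable {n : ℕ} {M' : Type*} [TopologicalSpace M']
  [ChartedSpace (EuclideanSpace ℝ (Fin n)) M']
  [IsManifold (𝓡 n) (⊤ : ℕ∞) M']
  {E : OddExactCourantAlgebroid n M'}

/-- `𝓕` applied to a section. -/
def ap (J : BnGACS E) (u : ∀ x, E.Fib x) : ∀ x, E.Fib x := fun x => J.F x (u x)

/-- Integrability of a `Bₙ`-generalized almost complex structure: the sections of its
i-eigenbundle `L ⊂ E^ℂ` are closed under the Dorfman bracket. -/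
def Integrable (J : BnGACS E) : Prop :=
  CourantAlgebroid.IntegrableF E.toCourantAlgebroid J.F

/-- `u ∈ Γ(U^⊥)`, where `U = Ker 𝓕` is spanned by `u₀`. -/
def Perp (J : BnGACS E) (u : ∀ x, E.Fib x) : Prop :=
  ∀ x, E.g x (u x) (J.u₀ x) = 0

/-- The Nijenhuis tensor `N_𝓕(u,v) = [𝓕u,𝓕v] − [u,v] − 𝓕([𝓕u,v] + [u,𝓕v])`. -/
def Nij (J : BnGACS E) (u v : ∀ x, E.Fib x) : ∀ x, E.Fib x :=
  fun x => E.bracket (J.ap u) (J.ap v) x - E.bracket u v x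
    - J.F x (E.bracket (J.ap u) v x + E.bracket u (J.ap v) x)

/-- The Dorfman-Lie derivative `(𝐋_{u₀} 𝓕) u = [u₀, 𝓕u] − 𝓕 [u₀, u]`. -/
def lieF (J : BnGACS E) (u : ∀ x, E.Fib x) : ∀ x, E.Fib x :=
  fun x => E.bracket J.u₀ (J.ap u) x - J.F x (E.bracket J.u₀ u x)

/-- The covariant derivative `(D_u 𝓕) v = D_u (𝓕 v) − 𝓕 (D_u v)`. -/
def covF (J : BnGACS E) (D : GenConnection E.toCourantAlgebroid)
    (u v : ∀ x, E.Fib x) : ∀ x, E.Fib x :=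
  fun x => D.D u (J.ap v) x - J.F x (D.D u v x)

end BnGACS

/-- A generalized (almost) complex structure on a Courant algebroid of even rank:
a `⟨·,·⟩`-skew-symmetric endomorphism `𝓙` with `𝓙² = −Id`, whose i-eigenbundle has
sections closed under the Dorfman bracket. -/
structure GenComplex (E : CourantAlgebroid m M) where
  J : ∀ x, E.Fib x →ₗ[ℝ] E.Fib x
  smooth : ∀ {u}, u ∈ E.secs → (fun x => J x (u x)) ∈ E.secs
  skew : ∀ x u v, E.g x (J x u) v = - E.g x u (J x v)
  sq : ∀ x v, J x (J x v) = -v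
  integrable : CourantAlgebroid.IntegrableF E J

end

variable {n : ℕ} {M : Type*} [TopologicalSpace M]
  [ChartedSpace (EuclideanSpace ℝ (Fin n)) M]
  [IsManifold (𝓡 n) (⊤ : ℕ∞) M]

/-! Since `𝓕u₀ = 0`, the image of `𝓕` lies in `U^⊥`, where `𝓕² = -Id`. Hence the sections of
`L` are exactly the `u + iv` with `u ∈ Γ(U^⊥)` and `v = -𝓕u`. The bracket of two of them has
real part `[u,u'] - [v,v']` and imaginary part `[u,v'] + [v,u']`, and substituting `v = -𝓕u`,
`v' = -𝓕u'` shows that `N_𝓕(u,u')` is exactly the defect of `𝓕 (Im) = Re`. The other half of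
the eigen-equation, `𝓕 (Re) = -Im`, is the same identity for the pair `s, -is'`. -/

namespace CourantAlgebroid

variable (E : CourantAlgebroid n M) {u v : ∀ x, E.Fib x}

lemma bracket_neg_left (hu : u ∈ E.secs) (hv : v ∈ E.secs) :
    E.bracket (fun y => -(u y)) v = fun y => -(E.bracket u v y) := by
  simpa only [neg_one_smul] using E.bracket_smul_left (-1) hu hv

lemma bracket_neg_right (hu : u ∈ E.secs) (hv : v ∈ E.secs) :
    E.bracket u (fun y => -(v y)) = fun y => -(E.bracket u v y) := by
  simpa only [neg_one_smul] using E.bracket_smul_right (-1) hu hv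

lemma integrableF_iff_F_im_eq_re (F : ∀ x, E.Fib x →ₗ[ℝ] E.Fib x) :
    E.IntegrableF F ↔
      ∀ {u v u' v'}, u ∈ E.secs → v ∈ E.secs → u' ∈ E.secs → v' ∈ E.secs →
        (∀ x, F x (u x) = -(v x)) → (∀ x, F x (v x) = u x) →
        (∀ x, F x (u' x) = -(v' x)) → (∀ x, F x (v' x) = u' x) →
        ∀ x, F x (E.bracket u v' x + E.bracket v u' x)
          = E.bracket u u' x - E.bracket v v' x := by
  refine ⟨fun h _ _ _ _ hu hv hu' hv' hFu hFv hFu' hFv' => (h hu hv hu' hv' hFu hFv hFu' hFv').2,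
    fun h u v u' v' hu hv hu' hv' hFu hFv hFu' hFv' => ⟨fun x => ?_, h hu hv hu' hv' hFu hFv hFu' hFv'⟩⟩
  have hrot := h hu hv hv' (E.secs_neg hu') hFu hFv (fun x => by rw [hFv', neg_neg])
    (fun x => by rw [map_neg, hFu', neg_neg]) x
  rw [E.bracket_neg_right hu hu', E.bracket_neg_right hv hu'] at hrot
  rw [← neg_eq_iff_eq_neg, ← map_neg, neg_sub, sub_eq_neg_add]
  simpa only [sub_neg_eq_add] using hrot

end CourantAlgebroid

namespace BnGACS

variable {E : OddExactCourantAlgebroid n M} (J : BnGACS E)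

lemma F_u₀ (x : M) : J.F x (J.u₀ x) = 0 := by
  have hpow : ((-1 : ℝ) ^ n) * (-1) ^ n = 1 := by
    rw [← pow_add, ← two_mul, pow_mul, neg_one_sq, one_pow]
  have hFF : J.F x (J.F x (J.u₀ x)) = 0 := by
    rw [J.F_sq, J.u₀_norm, hpow, one_smul, neg_add_cancel]
  have hg : E.g x (J.F x (J.u₀ x)) (J.u₀ x) = 0 := by
    have := J.skew x (J.u₀ x) (J.u₀ x)
    rw [E.g_symm x (J.u₀ x)] at this
    linarith
  simpa only [hFF, map_zero, hg, mul_zero, zero_smul, add_zero, zero_eq_neg] using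
    J.F_sq x (J.F x (J.u₀ x))

lemma g_F_u₀ (x : M) (w : E.Fib x) : E.g x (J.F x w) (J.u₀ x) = 0 := by
  rw [J.skew, J.F_u₀, map_zero, neg_zero]

lemma perp_of_F_eq {u v : ∀ x, E.Fib x} (hFv : ∀ x, J.F x (v x) = u x) : J.Perp u :=
  fun x => hFv x ▸ J.g_F_u₀ x (v x)

lemma F_neg_F_of_perp {u : ∀ x, E.Fib x} (hu : J.Perp u) (x : M) :
    J.F x (-J.F x (u x)) = u x := by
  rw [map_neg, J.F_sq, hu x, mul_zero, zero_smul, add_zero, neg_neg]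

lemma nij_eq_zero_iff_F_im_eq_re {u v u' v' : ∀ x, E.Fib x}
    (hu : u ∈ E.secs) (hv : v ∈ E.secs) (hu' : u' ∈ E.secs) (hv' : v' ∈ E.secs)
    (hFu : ∀ x, J.F x (u x) = -(v x)) (hFu' : ∀ x, J.F x (u' x) = -(v' x)) (x : M) :
    J.Nij u u' x = 0 ↔
      J.F x (E.bracket u v' x + E.bracket v u' x) = E.bracket u u' x - E.bracket v v' x := by
  have hap : J.ap u = fun y => -(v y) := funext hFu
  have hap' : J.ap u' = fun y => -(v' y) := funext hFu'
  have hnij : J.Nij u u' x = E.bracket v v' x - E.bracket u u' x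
      + J.F x (E.bracket u v' x + E.bracket v u' x) := by
    simp only [Nij, hap, hap', E.bracket_neg_left hv (E.secs_neg hv'),
      E.bracket_neg_right hv hv', E.bracket_neg_left hv hu', E.bracket_neg_right hu hv',
      neg_neg, ← neg_add, map_neg, add_comm (E.bracket v u' x)]
    abel
  rw [hnij, add_eq_zero_iff_eq_neg', neg_sub]

end BnGACS

/-- Let `E` be an odd exact Courant algebroid over an `n`-dimensional
manifold `M`, `𝓕` a `Bₙ`-generalized almost complex structure on `E` and `U = Ker 𝓕`.
Then `𝓕` is integrable if and only if its Nijenhuis tensor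
`N_𝓕(u,v) = [𝓕u,𝓕v] − [u,v] − 𝓕([𝓕u,v] + [u,𝓕v])` vanishes identically on
`Γ(U^⊥) × Γ(U^⊥)`. -/
theorem bnGACS_integrable_iff_nijenhuis_vanishes
    (E : OddExactCourantAlgebroid n M) (J : BnGACS E) :
    J.Integrable ↔
      ∀ u v, u ∈ E.secs → v ∈ E.secs → J.Perp u → J.Perp v →
        ∀ x, J.Nij u v x = 0 := by
  rw [BnGACS.Integrable, CourantAlgebroid.integrableF_iff_F_im_eq_re]
  constructor
  · intro hL u u' hu hu' hpu hpu' x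
    have hFu : ∀ x, J.F x (u x) = -(-J.F x (u x)) := fun _ => (neg_neg _).symm
    have hFu' : ∀ x, J.F x (u' x) = -(-J.F x (u' x)) := fun _ => (neg_neg _).symm
    have hv := E.secs_neg (J.smooth hu)
    have hv' := E.secs_neg (J.smooth hu')
    exact (J.nij_eq_zero_iff_F_im_eq_re hu hv hu' hv' hFu hFu' x).2
      (hL hu hv hu' hv' hFu (J.F_neg_F_of_perp hpu) hFu' (J.F_neg_F_of_perp hpu') x)
  · intro hN u v u' v' hu hv hu' hv' hFu hFv hFu' hFv' x
    exact (J.nij_eq_zero_iff_F_im_eq_re hu hv hu' hv' hFu hFu' x).1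
      (hN u u' hu hu' (J.perp_of_F_eq hFv) (J.perp_of_F_eq hFv') x)
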